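/- (Kempe) Fix an embedding of the finite set L into the unit circle in the plane, and call a graph on L planar if its edges, drawn as chords of the circle, do not cross. Then the elements X_Gamma with Gamma planar span R_L over Z, and the only Z-linear relations among them are the sign relations; consequently, if for each undirected planar regular graph one chooses a direction on its edges, the resulting elements X_Gamma form a Z-basis of R_L. -/

import Mathlib

/-
Common definitions: the graphical algebra `R_L` of [HMSV], its graded pieces
`V_L`, `W_L`, the relation modules `B_L`, `I_L`, the partitioned ("tilde")
modules, and the planarity notions coming from an embedding of the vertex set
in the unit circle.
-/

open scoped TensorProduct

set_option linter.unusedSectionVars false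
set_option linter.unusedVariables false

noncomputable section

namespace HMSV

variable {α : Type} [DecidableEq α]

/-- A directed multigraph on the vertex type `α`: a multiset of directed edges
(loops and repeated edges allowed). -/
abbrev Graph (α : Type) := Multiset (α × α)

/-- The degree (valence) of a vertex; a loop counts twice. -/
def deg (Γ : Graph α) (v : α) : ℕ :=
  (Γ.map Prod.fst).count v + (Γ.map Prod.snd).count v

/-- `Γ` is a regular graph of degree `k` on the finite vertex set `L`. -/
def IsRegOn (L : Finset α) (Γ : Graph α) (k : ℕ) : Prop :=
  (∀ v ∈ L, deg Γ v = k) ∧ ∀ v : α, v ∉ L → deg Γ v = 0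

lemma deg_add (Γ Δ : Graph α) (v : α) : deg (Γ + Δ) v = deg Γ v + deg Δ v := by
  simp [deg, Multiset.count_add]; omega

lemma IsRegOn.add {L : Finset α} {Γ Δ : Graph α} {k l : ℕ}
    (h : IsRegOn L Γ k) (h' : IsRegOn L Δ l) : IsRegOn L (Γ + Δ) (k + l) := by
  constructor
  · intro v hv; rw [deg_add, h.1 v hv, h'.1 v hv]
  · intro v hv; rw [deg_add, h.2 v hv, h'.2 v hv]

/-- A subset `U` is closed with respect to `Γ` if every edge of `Γ` meeting `U`
lies entirely inside `U`. -/
def ClosedIn (Γ : Graph α) (U : Finset α) : Prop := ∀ e ∈ Γ, (e.1 ∈ U ↔ e.2 ∈ U)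

lemma ClosedIn.add {Γ Δ : Graph α} {U : Finset α}
    (h : ClosedIn Γ U) (h' : ClosedIn Δ U) : ClosedIn (Γ + Δ) U := by
  intro e he
  rcases Multiset.mem_add.mp he with h'' | h''
  exacts [h e h'', h' e h'']

/-- The semigroup algebra over `ℤ` on the semigroup of graphs on `α`
(multiplication = disjoint union of edge multisets). -/
abbrev FreeA (α : Type) [DecidableEq α] := AddMonoidAlgebra ℤ (Graph α)

/-- The basis element corresponding to a graph. -/
def sgl (Γ : Graph α) : FreeA α := AddMonoidAlgebra.single Γ 1

/-- The loop, sign and Pluecker relators. -/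
def ringRels (α : Type) [DecidableEq α] : Set (FreeA α) :=
  {x | ∃ (Γ : Graph α) (v : α), (v, v) ∈ Γ ∧ x = sgl Γ} ∪
  {x | ∃ (Γ : Graph α) (a b : α), x = sgl (Γ + {(a, b)}) + sgl (Γ + {(b, a)})} ∪
  {x | ∃ (Γ : Graph α) (a b c d : α),
      x = sgl (Γ + {(a, b), (c, d)}) - sgl (Γ + {(a, d), (c, b)})
        - sgl (Γ + {(a, c), (b, d)})}

def relIdeal (α : Type) [DecidableEq α] : Ideal (FreeA α) := Ideal.span (ringRels α)

/-- The graphical ring.  Since the loop, sign and Pluecker relations preserve the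
degree function of a graph, for every finite `L ⊆ α` the ring `R_L` of [HMSV] sits
inside `RL α` as the span of the classes of regular graphs on `L`. -/
abbrev RL (α : Type) [DecidableEq α] := FreeA α ⧸ relIdeal α

/-- The class of a graph in the graphical ring. -/
def X (Γ : Graph α) : RL α := Ideal.Quotient.mk (relIdeal α) (sgl Γ)

/-- The first graded piece `V_L` of `R_L`, spanned by the matchings on `L`. -/
def VL (L : Finset α) : Submodule ℤ (RL α) :=
  Submodule.span ℤ {x | ∃ Γ, IsRegOn L Γ 1 ∧ x = X Γ}

/-- The second graded piece `W_L` of `R_L`. -/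
def WL (L : Finset α) : Submodule ℤ (RL α) :=
  Submodule.span ℤ {x | ∃ Γ, IsRegOn L Γ 2 ∧ x = X Γ}

/-- The full coordinate ring `R_L`, as a `ℤ`-submodule of `RL α`. -/
def RLfull (L : Finset α) : Submodule ℤ (RL α) :=
  Submodule.span ℤ {x | ∃ Γ k, IsRegOn L Γ k ∧ x = X Γ}

/-- `X Γ` as an element of `V_L`, for `Γ` a matching on `L`. -/
def vx {L : Finset α} {Γ : Graph α} (h : IsRegOn L Γ 1) : VL L :=
  ⟨X Γ, Submodule.subset_span ⟨Γ, h, rfl⟩⟩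

/-- The multiplication map `V_L ⊗ V_L → R` (its image is `W_L`, its kernel `B_L`). -/
def mulMap (L : Finset α) : (VL L) ⊗[ℤ] (VL L) →ₗ[ℤ] RL α :=
  TensorProduct.lift (((LinearMap.mul ℤ (RL α)).compl₁₂ (VL L).subtype (VL L).subtype))

/-- `B_L`, the kernel of the multiplication map `V_L ⊗ V_L → W_L`. -/
def BL (L : Finset α) : Submodule ℤ ((VL L) ⊗[ℤ] (VL L)) :=
  LinearMap.ker (mulMap L)

/-- The submodule of `V_L ⊗ V_L` by which one quotients to obtain `Sym²(V_L)`. -/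
def commSub (L : Finset α) : Submodule ℤ ((VL L) ⊗[ℤ] (VL L)) :=
  Submodule.span ℤ {z | ∃ x y : VL L, z = x ⊗ₜ[ℤ] y - y ⊗ₜ[ℤ] x}

/-- `Sym²(V_L)`, modelled as `(V_L ⊗ V_L)/⟨x⊗y - y⊗x⟩`. -/
abbrev Sym2V (L : Finset α) := ((VL L) ⊗[ℤ] (VL L)) ⧸ commSub L

/-- The quadratic relation space `I_L^{(2)} ⊆ Sym²(V_L)`: the image of `B_L`. -/
def I2 (L : Finset α) : Submodule ℤ (Sym2V L) :=
  (BL L).map (commSub L).mkQ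

/-- The simple binomial relations, as elements of `B_L ⊆ V_L ⊗ V_L`:
`X_{ΓΔ} ⊗ X_{Γ'Δ'} - X_{ΓΔ'} ⊗ X_{Γ'Δ}` for matchings `Δ, Δ'` on a four-element
subset `U ⊆ L` and matchings `Γ, Γ'` on `L \ U`. -/
def simpleBinsT (L : Finset α) : Set ((VL L) ⊗[ℤ] (VL L)) :=
  {t | ∃ (U : Finset α) (_ : U ⊆ L) (_ : U.card = 4)
      (Δ Δ' Γ Γ' : Graph α)
      (_ : IsRegOn U Δ 1) (_ : IsRegOn U Δ' 1)
      (_ : IsRegOn (L \ U) Γ 1) (_ : IsRegOn (L \ U) Γ' 1)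
      (h1 : IsRegOn L (Γ + Δ) 1) (h2 : IsRegOn L (Γ' + Δ') 1)
      (h3 : IsRegOn L (Γ + Δ') 1) (h4 : IsRegOn L (Γ' + Δ) 1),
    t = vx h1 ⊗ₜ[ℤ] vx h2 - vx h3 ⊗ₜ[ℤ] vx h4}

/-- The simple binomial relations as elements of `I_L^{(2)} ⊆ Sym²(V_L)`. -/
def simpleBinsSym2 (L : Finset α) : Set (Sym2V L) :=
  (commSub L).mkQ '' simpleBinsT L

/-- A partition of `L`: at least two pairwise disjoint pieces of even cardinality
covering `L`. -/
def IsPartitionOn (L : Finset α) (𝒰 : Finset (Finset α)) : Prop :=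
  2 ≤ 𝒰.card ∧ (∀ U ∈ 𝒰, U ⊆ L ∧ Even U.card) ∧
    (𝒰 : Set (Finset α)).PairwiseDisjoint id ∧ ∀ v ∈ L, ∃ U ∈ 𝒰, v ∈ U

/-- Index type for `tilde-W_L`: pairs `(Γ, 𝒰)` where `Γ` is a regular degree-two
graph on `L` and `𝒰` is a partition of `L` closed with respect to `Γ`. -/
def WIdx (L : Finset α) : Type :=
  {p : Graph α × Finset (Finset α) //
    IsRegOn L p.1 2 ∧ IsPartitionOn L p.2 ∧ ∀ U ∈ p.2, ClosedIn p.1 U}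

/-- The free module on pairs `(Γ, 𝒰)`; `tilde-W_L` is its quotient by the span of
`relsW L`. -/
abbrev FW (L : Finset α) := WIdx L →₀ ℤ

def wSingle {L : Finset α} (p : WIdx L) : FW L := Finsupp.single p 1

/-- Loop relators in `FW L`. -/
def loopRelsW (L : Finset α) : Set (FW L) :=
  {x | ∃ p : WIdx L, (∃ v, (v, v) ∈ p.1.1) ∧ x = wSingle p}

/-- Sign relators in `FW L`. -/
def signRelsW (L : Finset α) : Set (FW L) :=
  {x | ∃ p q : WIdx L, p.1.2 = q.1.2 ∧
    (∃ (Γ₀ : Graph α) (a b : α), p.1.1 = Γ₀ + {(a, b)} ∧ q.1.1 = Γ₀ + {(b, a)}) ∧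
    x = wSingle p + wSingle q}

/-- Pluecker relators in `FW L`, applied only to pairs of edges lying in the same
piece of the partition. -/
def pluckerRelsW (L : Finset α) : Set (FW L) :=
  {x | ∃ p q r : WIdx L, p.1.2 = q.1.2 ∧ p.1.2 = r.1.2 ∧
    (∃ (Γ₀ : Graph α) (a b c d : α) (U : Finset α), U ∈ p.1.2 ∧
      a ∈ U ∧ b ∈ U ∧ c ∈ U ∧ d ∈ U ∧
      p.1.1 = Γ₀ + {(a, b), (c, d)} ∧ q.1.1 = Γ₀ + {(a, d), (c, b)} ∧
      r.1.1 = Γ₀ + {(a, c), (b, d)}) ∧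
    x = wSingle p - wSingle q - wSingle r}

/-- The defining relators of `tilde-W_L`. -/
def relsW (L : Finset α) : Set (FW L) := loopRelsW L ∪ signRelsW L ∪ pluckerRelsW L

/-- The merging relators `(Γ, 𝒰) - (Γ, 𝒰')`, where `𝒰` has at least three pieces
and `𝒰'` is obtained from `𝒰` by merging two pieces. -/
def mergeRels (L : Finset α) : Set (FW L) :=
  {x | ∃ p q : WIdx L, p.1.1 = q.1.1 ∧ 3 ≤ p.1.2.card ∧
    (∃ U₁ U₂ : Finset α, U₁ ∈ p.1.2 ∧ U₂ ∈ p.1.2 ∧ U₁ ≠ U₂ ∧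
      q.1.2 = insert (U₁ ∪ U₂) ((p.1.2.erase U₁).erase U₂)) ∧
    x = wSingle p - wSingle q}

/-- The odd cycle exchange relators
`(Γ, {U₁ ∪ U₂, U₃ ∪ U₄}) - (Γ, {U₁ ∪ U₃, U₂ ∪ U₄})`. -/
def oddExchRels (L : Finset α) : Set (FW L) :=
  {x | ∃ p q : WIdx L, p.1.1 = q.1.1 ∧
    (∃ U₁ U₂ U₃ U₄ : Finset α,
      Disjoint U₁ U₂ ∧ Disjoint U₁ U₃ ∧ Disjoint U₁ U₄ ∧ Disjoint U₂ U₃ ∧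
      Disjoint U₂ U₄ ∧ Disjoint U₃ U₄ ∧
      Odd U₁.card ∧ Odd U₂.card ∧ Odd U₃.card ∧ Odd U₄.card ∧
      U₁ ∪ U₂ ∪ U₃ ∪ U₄ = L ∧
      ClosedIn p.1.1 U₁ ∧ ClosedIn p.1.1 U₂ ∧ ClosedIn p.1.1 U₃ ∧ ClosedIn p.1.1 U₄ ∧
      p.1.2 = {U₁ ∪ U₂, U₃ ∪ U₄} ∧ q.1.2 = {U₁ ∪ U₃, U₂ ∪ U₄}) ∧
    x = wSingle p - wSingle q}

/-- All relators defining `W'_L` as a quotient of the free module `FW L`: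
the defining relators of `tilde-W_L` together with the merging and odd cycle
exchange relators. -/
def relsWMO (L : Finset α) : Set (FW L) := relsW L ∪ mergeRels L ∪ oddExchRels L

/-- Index type for `tilde-V^{(2)}_L`: two matchings (a 2-colored graph) together
with a partition closed with respect to both. -/
def VIdx (L : Finset α) : Type :=
  {p : (Graph α × Graph α) × Finset (Finset α) //
    IsRegOn L p.1.1 1 ∧ IsRegOn L p.1.2 1 ∧ IsPartitionOn L p.2 ∧
      (∀ U ∈ p.2, ClosedIn p.1.1 U) ∧ ∀ U ∈ p.2, ClosedIn p.1.2 U}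

/-- The free module on such triples; `tilde-V^{(2)}_L` is its quotient. -/
abbrev FV (L : Finset α) := VIdx L →₀ ℤ

def vSingle {L : Finset α} (p : VIdx L) : FV L := Finsupp.single p 1

/-- The forgetful map `tilde-W_L → W_L ⊆ R`, at the level of free modules. -/
def ΦW (L : Finset α) : FW L →ₗ[ℤ] RL α :=
  Finsupp.lift (RL α) ℤ (WIdx L) fun p => X p.1.1

/-- The forgetful map `tilde-V^{(2)}_L → V_L ⊗ V_L`, at the level of free modules. -/
def ΦV (L : Finset α) : FV L →ₗ[ℤ] (VL L) ⊗[ℤ] (VL L) :=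
  Finsupp.lift ((VL L) ⊗[ℤ] (VL L)) ℤ (VIdx L) fun p => vx p.2.1 ⊗ₜ[ℤ] vx p.2.2.1

/-- The map `tilde-V^{(2)}_L → tilde-W_L` (forget the coloring), at the level of
free modules. -/
def ψmap (L : Finset α) : FV L →ₗ[ℤ] FW L :=
  Finsupp.lift (FW L) ℤ (VIdx L) fun p =>
    wSingle ⟨(p.1.1.1 + p.1.1.2, p.1.2),
      p.2.1.add p.2.2.1, p.2.2.2.1,
      fun U hU => (p.2.2.2.2.1 U hU).add (p.2.2.2.2.2 U hU)⟩

/-! ### Planarity with respect to an embedding of the vertices in the unit circle -/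

/-- Two edges cross when drawn as chords: their four endpoints are distinct and the
open chords intersect. -/
def Crosses (ι : α → EuclideanSpace ℝ (Fin 2)) (e f : α × α) : Prop :=
  e.1 ≠ f.1 ∧ e.1 ≠ f.2 ∧ e.2 ≠ f.1 ∧ e.2 ≠ f.2 ∧
  (openSegment ℝ (ι e.1) (ι e.2) ∩ openSegment ℝ (ι f.1) (ι f.2)).Nonempty

/-- A graph is planar (w.r.t. the embedding `ι` of its vertices in the circle) if it
has no loops and no two of its edges cross. -/
def IsPlanarOn (ι : α → EuclideanSpace ℝ (Fin 2)) (Γ : Graph α) : Prop :=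
  (∀ e ∈ Γ, e.1 ≠ e.2) ∧ ∀ e f : α × α, {e, f} ≤ Γ → ¬ Crosses ι e f

/-- The underlying undirected edge of a directed edge. -/
def und (e : α × α) : Sym2 α := s(e.1, e.2)

/-- The underlying undirected multigraph of a directed multigraph. -/
def undG (Γ : Graph α) : Multiset (Sym2 α) := Γ.map und

/-- The number of edges of `Γ` crossed by the chord `e`. -/
def crossCount (ι : α → EuclideanSpace ℝ (Fin 2)) (e : α × α) (Γ : Graph α) : ℕ :=
  @Multiset.countP _ (fun f => Crosses ι e f) (Classical.decPred _) Γ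

/-- One-step adjacency in `Γ`. -/
def stepRel (Γ : Graph α) (a b : α) : Prop := (a, b) ∈ Γ ∨ (b, a) ∈ Γ

/-- Connectivity in `Γ`. -/
def Conn (Γ : Graph α) : α → α → Prop := Relation.ReflTransGen (stepRel Γ)

/-- All the vertices of `S` are connected to one another in `Γ`. -/
def ConnectedOn (S : Finset α) (Γ : Graph α) : Prop := ∀ a ∈ S, ∀ b ∈ S, Conn Γ a b

/-- A regular degree-two graph on `L` is forbidden if it is connected or a disjoint
union of two odd cycles. -/
def IsForbidden (L : Finset α) (Γ : Graph α) : Prop :=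
  ConnectedOn L Γ ∨
  ∃ C₁ C₂ : Finset α, Disjoint C₁ C₂ ∧ C₁ ∪ C₂ = L ∧ Odd C₁.card ∧ Odd C₂.card ∧
    ClosedIn Γ C₁ ∧ ClosedIn Γ C₂ ∧ ConnectedOn C₁ Γ ∧ ConnectedOn C₂ Γ

/-- A graph is allowable if it is not forbidden. -/
def Allowable (L : Finset α) (Γ : Graph α) : Prop := ¬ IsForbidden L Γ

/-- `𝒞` is the decomposition of the (disjoint union of cycles) graph `Γ` covering `S`
into its cycles. -/
def IsCycleDecompOn (S : Finset α) (Γ : Graph α) (𝒞 : Finset (Finset α)) : Prop :=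
  (∀ C ∈ 𝒞, C.Nonempty ∧ C ⊆ S ∧ ClosedIn Γ C ∧ ConnectedOn C Γ) ∧
    (𝒞 : Set (Finset α)).PairwiseDisjoint id ∧ ∀ v ∈ S, ∃ C ∈ 𝒞, v ∈ C

/-- A graph is quasi-planar if it is planar, or it has a doubled edge whose removal
leaves a planar graph and which crosses exactly two edges. -/
def IsQuasiPlanarOn (ι : α → EuclideanSpace ℝ (Fin 2)) (Γ : Graph α) : Prop :=
  IsPlanarOn ι Γ ∨
  ∃ (Γ' : Graph α) (a b : α) (e₁ e₂ : α × α),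
    a ≠ b ∧ und e₁ = s(a, b) ∧ und e₂ = s(a, b) ∧ Γ = Γ' + {e₁, e₂} ∧
    IsPlanarOn ι Γ' ∧ crossCount ι (a, b) Γ' = 2

/-- The level of a quasi-planar graph: the number of its cycles, not counting the
distinguished doubled edge in the non-planar case. -/
def HasLevel (ι : α → EuclideanSpace ℝ (Fin 2)) (L : Finset α) (Γ : Graph α) (i : ℕ) :
    Prop :=
  (IsPlanarOn ι Γ ∧ ∃ 𝒞, IsCycleDecompOn L Γ 𝒞 ∧ 𝒞.card = i) ∨
  (¬ IsPlanarOn ι Γ ∧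
    ∃ (Γ' : Graph α) (a b : α) (e₁ e₂ : α × α),
      a ≠ b ∧ und e₁ = s(a, b) ∧ und e₂ = s(a, b) ∧ Γ = Γ' + {e₁, e₂} ∧
      IsPlanarOn ι Γ' ∧ crossCount ι (a, b) Γ' = 2 ∧
      ∃ 𝒞, IsCycleDecompOn ((L.erase a).erase b) Γ' 𝒞 ∧ 𝒞.card = i)

/-- `Γp` is the associated planar graph of the quasi-planar graph `Γ`: either `Γ` is
planar and `Γp` is `Γ` itself (up to orientation of the edges), or `Γp` is obtained
from `Γ` by replacing the distinguished doubled edge on `{a, b}` together with the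
unique cycle `comp` that it crosses by the unique planar cycle `Z` on the same set of
vertices. -/
def AssocPlanarOf (ι : α → EuclideanSpace ℝ (Fin 2)) (L : Finset α)
    (Γ Γp : Graph α) : Prop :=
  (IsPlanarOn ι Γ ∧ undG Γp = undG Γ) ∨
  ∃ (rest comp Z : Graph α) (a b : α) (e₁ e₂ : α × α) (S : Finset α),
    a ≠ b ∧ a ∉ S ∧ b ∉ S ∧ und e₁ = s(a, b) ∧ und e₂ = s(a, b) ∧
    Γ = rest + comp + {e₁, e₂} ∧
    IsPlanarOn ι (rest + comp) ∧
    IsRegOn S comp 2 ∧ ConnectedOn S comp ∧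
    (∀ f ∈ rest, f.1 ∉ S ∧ f.2 ∉ S) ∧
    crossCount ι (a, b) comp = 2 ∧ (∀ f ∈ rest, ¬ Crosses ι (a, b) f) ∧
    IsRegOn (insert a (insert b S)) Z 2 ∧ ConnectedOn (insert a (insert b S)) Z ∧
    IsPlanarOn ι Z ∧
    Γp = rest + Z

/-- Delete all edges containing the vertex `v`. -/
def delVertex (Γ : Graph α) (v : α) : Graph α :=
  Γ.filter fun e => e.1 ≠ v ∧ e.2 ≠ v

/-- A vertex is special if deleting all edges containing it leaves a planar graph. -/
def IsSpecialVtx (ι : α → EuclideanSpace ℝ (Fin 2)) (Γ : Graph α) (v : α) : Prop :=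
  IsPlanarOn ι (delVertex Γ v)

/-- A graph is semi-planar if it contains a special vertex. -/
def SemiPlanarOn (ι : α → EuclideanSpace ℝ (Fin 2)) (L : Finset α) (Γ : Graph α) :
    Prop :=
  ∃ v ∈ L, IsSpecialVtx ι Γ v

/-- Both endpoints of `e` lie in `C`. -/
def edgeIn (e : α × α) (C : Finset α) : Prop := e.1 ∈ C ∧ e.2 ∈ C

/-- The chord `e` crosses no edge of `Γ`. -/
def NoCross (ι : α → EuclideanSpace ℝ (Fin 2)) (Γ : Graph α) (e : α × α) : Prop :=
  ∀ f ∈ Γ, ¬ Crosses ι e f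

/-- A decomposition of `Γ` into exactly two cycles. -/
def TwoCycleDecomp (L : Finset α) (Γ : Graph α) (C₁ C₂ : Finset α) : Prop :=
  C₁.Nonempty ∧ C₂.Nonempty ∧ Disjoint C₁ C₂ ∧ C₁ ∪ C₂ = L ∧
    ClosedIn Γ C₁ ∧ ClosedIn Γ C₂ ∧ ConnectedOn C₁ Γ ∧ ConnectedOn C₂ Γ

/-- A decomposition of `Γ` into exactly three cycles. -/
def ThreeCycleDecomp (L : Finset α) (Γ : Graph α) (C₁ C₂ C₃ : Finset α) : Prop :=
  C₁.Nonempty ∧ C₂.Nonempty ∧ C₃.Nonempty ∧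
    Disjoint C₁ C₂ ∧ Disjoint C₁ C₃ ∧ Disjoint C₂ C₃ ∧ C₁ ∪ C₂ ∪ C₃ = L ∧
    ClosedIn Γ C₁ ∧ ClosedIn Γ C₂ ∧ ClosedIn Γ C₃ ∧
    ConnectedOn C₁ Γ ∧ ConnectedOn C₂ Γ ∧ ConnectedOn C₃ Γ

/-- A pair of edges of an allowable graph is allowable: if the graph is a union of
two cycles, the two edges must lie in the same cycle; if it is a union of three
cycles two of which are odd, the two edges must lie in cycles of the same parity;
otherwise there is no condition. -/
def AllowablePair (L : Finset α) (Γ : Graph α) (e e' : α × α) : Prop :=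
  (∀ C₁ C₂ : Finset α, TwoCycleDecomp L Γ C₁ C₂ →
      (edgeIn e C₁ ∧ edgeIn e' C₁) ∨ (edgeIn e C₂ ∧ edgeIn e' C₂)) ∧
  (∀ C₁ C₂ C₃ : Finset α, ThreeCycleDecomp L Γ C₁ C₂ C₃ →
    Odd C₁.card → Odd C₂.card →
      ∀ C C' : Finset α, (C = C₁ ∨ C = C₂ ∨ C = C₃) → (C' = C₁ ∨ C' = C₂ ∨ C' = C₃) →
        edgeIn e C → edgeIn e' C' → (Even C.card ↔ Even C'.card))

/-- The level filtration on `W_L`: `FsubW ι L i` is the span of the classes of the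
planar regular degree-two graphs on `L` of level at least `i`. -/
def FsubW (ι : α → EuclideanSpace ℝ (Fin 2)) (L : Finset α) (i : ℕ) :
    Submodule ℤ (RL α) :=
  Submodule.span ℤ {x | ∃ Γ 𝒞, IsRegOn L Γ 2 ∧ IsPlanarOn ι Γ ∧
    IsCycleDecompOn L Γ 𝒞 ∧ i ≤ 𝒞.card ∧ x = X Γ}

/-- The level filtration on `W'_L`, at the level of the free module `FW L`:
the span of the defining relators of `W'_L` together with the generators `(Γ, 𝒰)`
with `Γ` allowable quasi-planar of level at least `i`. -/
def FsubW' (ι : α → EuclideanSpace ℝ (Fin 2)) (L : Finset α) (i : ℕ) :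
    Submodule ℤ (FW L) :=
  Submodule.span ℤ (relsWMO L ∪
    {y | ∃ p : WIdx L, Allowable L p.1.1 ∧ IsQuasiPlanarOn ι p.1.1 ∧
      (∃ j, i ≤ j ∧ HasLevel ι L p.1.1 j) ∧ y = wSingle p})

/-! ### The symmetric algebra on `V_L` -/

/-- The linearity relations turning the free commutative ring on the set `V_L` into
the symmetric algebra `Sym(V_L)` over `ℤ`. -/
def symRels (L : Finset α) : Ideal (FreeCommRing (VL L)) :=
  Ideal.span
    ({x | ∃ v w : VL L,
        x = FreeCommRing.of (v + w) - FreeCommRing.of v - FreeCommRing.of w} ∪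
     {x | ∃ (n : ℤ) (v : VL L), x = FreeCommRing.of (n • v) - n • FreeCommRing.of v})

/-- The symmetric algebra `Sym(V_L)` over `ℤ`. -/
abbrev SymV (L : Finset α) := FreeCommRing (VL L) ⧸ symRels L

/-- The degree-one generator of `Sym(V_L)` corresponding to `v ∈ V_L`. -/
def symGen {L : Finset α} (v : VL L) : SymV L :=
  Ideal.Quotient.mk (symRels L) (FreeCommRing.of v)

/-- The canonical map `Sym(V_L) → R_L` (surjective by Kempe's theorem); its kernel
is the ideal of relations `I_L`. -/
def symToR (L : Finset α) : SymV L →+* RL α :=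
  Ideal.Quotient.lift (symRels L) (FreeCommRing.lift fun v : VL L => (v : RL α))
    (by
      intro a ha
      have hle : symRels L ≤
          RingHom.ker (FreeCommRing.lift fun v : VL L => (v : RL α)) := by
        rw [symRels, Ideal.span_le]
        rintro x (⟨v, w, rfl⟩ | ⟨n, v, rfl⟩) <;>
        · show _ ∈ RingHom.ker _
          rw [RingHom.mem_ker]
          simp only [map_sub, map_zsmul, FreeCommRing.lift_of,
            Submodule.coe_add, Submodule.coe_smul]
          abel
      exact hle ha)

/-- The ideal of relations `I_L = ker (Sym(V_L) → R_L)`. -/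
def IL (L : Finset α) : Ideal (SymV L) := RingHom.ker (symToR L)

/-- The union of the matchings `Γ` and `Γ'` consists of a single 4-cycle together
with 2-cycles (doubled edges). -/
def FourCyclePlusDoubles (Γ Γ' : Graph α) : Prop :=
  ∃ (a b c d : α) (m : Multiset (Sym2 α)),
    a ≠ b ∧ a ≠ c ∧ a ≠ d ∧ b ≠ c ∧ b ≠ d ∧ c ≠ d ∧
    undG Γ + undG Γ' = {s(a, b), s(b, c), s(c, d), s(d, a)} + (m + m)

/-- The simplest binomial relations, as degree-two elements of `Sym(V_L)`:
simple binomial relations for which the union of the two matchings on `L \ U` is a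
single 4-cycle together with 2-cycles. -/
def simplestBinsSym (L : Finset α) : Set (SymV L) :=
  {x | ∃ (U : Finset α) (_ : U ⊆ L) (_ : U.card = 4)
      (Δ Δ' Γ Γ' : Graph α)
      (_ : IsRegOn U Δ 1) (_ : IsRegOn U Δ' 1)
      (_ : IsRegOn (L \ U) Γ 1) (_ : IsRegOn (L \ U) Γ' 1)
      (_ : FourCyclePlusDoubles Γ Γ')
      (h1 : IsRegOn L (Γ + Δ) 1) (h2 : IsRegOn L (Γ' + Δ') 1)
      (h3 : IsRegOn L (Γ + Δ') 1) (h4 : IsRegOn L (Γ' + Δ) 1),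
    x = symGen (vx h1) * symGen (vx h2) - symGen (vx h3) * symGen (vx h4)}

end HMSV

/-!
Spanning is Kempe's uncrossing argument. If two chords `ab`, `cd` of `Γ` cross, the Plücker
relation writes `X_Γ` as the sum of the classes of the graphs with `ab, cd` replaced by `ad, cb`
and by `ac, bd`; by the strict triangle inequality at the crossing point, both are strictly
shorter in total chord length, and among the finitely many `k`-regular graphs on `L` this
process ends with planar graphs.

For independence, `X_Γ ↦ ∏_{(a,b) ∈ Γ} (x_a y_b - x_b y_a)` is a ring map from `R_L` to a
polynomial ring. Order the vertices by angle on the circle. The monomial of least `x`-weight in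
the image of a planar graph is `∏ x_a y_b` over its edges directed from smaller to larger angle,
which records the left and right endpoints of these edges seen as intervals; as the intervals
do not cross, they are determined by these endpoints. Distinct undirected planar graphs thus have
distinct lowest monomials, and the images are independent by triangularity.
-/

lemma Multiset.pair_le_iff {β : Type*} [DecidableEq β] {a b : β} {s : Multiset β} :
    ({a, b} : Multiset β) ≤ s ↔ a ∈ s ∧ b ∈ s.erase a := by
  refine ⟨fun h => ⟨Multiset.mem_of_le h (by simp), ?_⟩, fun ⟨ha, hb⟩ => ?_⟩
  · simpa using Multiset.erase_le_erase a h
  · rw [← Multiset.cons_erase ha]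
    exact Multiset.cons_le_cons a (Multiset.singleton_le.mpr hb)

lemma Multiset.exists_pair_le_of_pair_le_map {β γ : Type*} (g : β → γ) {s : Multiset β}
    {x y : γ} (h : ({x, y} : Multiset γ) ≤ s.map g) :
    ∃ e f, ({e, f} : Multiset β) ≤ s ∧ g e = x ∧ g f = y := by
  classical
  obtain ⟨hx, hy⟩ := Multiset.pair_le_iff.mp h
  obtain ⟨e, he, rfl⟩ := Multiset.mem_map.mp hx
  rw [← Multiset.map_erase_of_mem _ _ he] at hy
  obtain ⟨f, hf, rfl⟩ := Multiset.mem_map.mp hy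
  exact ⟨e, f, Multiset.pair_le_iff.mpr ⟨he, hf⟩, rfl, rfl⟩

lemma Multiset.eq_of_map_eq_of_injOn {β γ : Type*} {f : β → γ} {S : Set β} (hf : Set.InjOn f S)
    {s t : Multiset β} (hs : ∀ x ∈ s, x ∈ S) (ht : ∀ x ∈ t, x ∈ S) (h : s.map f = t.map f) :
    s = t := by
  rcases isEmpty_or_nonempty β with hβ | hβ
  · simp [Multiset.eq_zero_of_forall_notMem fun x => hβ.elim x]
  have hinv (u : Multiset β) (hu : ∀ x ∈ u, x ∈ S) : (u.map f).map (Function.invFunOn f S) = u := by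
    rw [Multiset.map_map]
    exact (Multiset.map_congr rfl fun x hx => hf.leftInvOn_invFunOn (hu x hx)).trans u.map_id
  rw [← hinv s hs, ← hinv t ht, h]

section MinWeight

variable {σ R M : Type*} [AddCommMonoid M] [LinearOrder M]

def IsMinWeightMonomial [CommSemiring R] (w : (σ →₀ ℕ) →+ M) (p : MvPolynomial σ R)
    (m : σ →₀ ℕ) : Prop :=
  p.coeff m ≠ 0 ∧ ∀ m' ∈ p.support, m' ≠ m → w m < w m'

namespace IsMinWeightMonomial

variable {w : (σ →₀ ℕ) →+ M}

lemma le_of_mem_support [CommSemiring R] {p : MvPolynomial σ R} {m m' : σ →₀ ℕ}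
    (hp : IsMinWeightMonomial w p m) (hm' : m' ∈ p.support) : w m ≤ w m' := by
  rcases eq_or_ne m' m with rfl | hne
  exacts [le_rfl, (hp.2 m' hm' hne).le]

lemma add_lt_add_of_ne [IsOrderedCancelAddMonoid M] [CommSemiring R] {p q : MvPolynomial σ R}
    {m n a b : σ →₀ ℕ}
    (hp : IsMinWeightMonomial w p m) (hq : IsMinWeightMonomial w q n)
    (ha : a ∈ p.support) (hb : b ∈ q.support) (hne : (a, b) ≠ (m, n)) :
    w m + w n < w a + w b := by
  rcases eq_or_ne a m with rfl | ham
  · exact add_lt_add_of_le_of_lt le_rfl (hq.2 b hb fun h => hne (by rw [h]))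
  · exact add_lt_add_of_lt_of_le (hp.2 a ha ham) (hq.le_of_mem_support hb)

lemma mul [IsOrderedCancelAddMonoid M] [CommSemiring R] [NoZeroDivisors R]
    {p q : MvPolynomial σ R} {m n : σ →₀ ℕ}
    (hp : IsMinWeightMonomial w p m) (hq : IsMinWeightMonomial w q n) :
    IsMinWeightMonomial w (p * q) (m + n) := by
  classical
  refine ⟨?_, fun m' hm' hne => ?_⟩
  · rw [MvPolynomial.coeff_mul, Finset.sum_eq_single (m, n)]
    · exact mul_ne_zero hp.1 hq.1
    · rintro ⟨a, b⟩ hab hne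
      by_contra h
      have ha := MvPolynomial.mem_support_iff.mpr (left_ne_zero_of_mul h)
      have hb := MvPolynomial.mem_support_iff.mpr (right_ne_zero_of_mul h)
      have hlt := hp.add_lt_add_of_ne hq ha hb hne
      rw [← map_add, ← map_add, Finset.HasAntidiagonal.mem_antidiagonal.mp hab] at hlt
      exact lt_irrefl _ hlt
    · simp
  · obtain ⟨a, ha, b, hb, rfl⟩ := Finset.mem_add.mp (MvPolynomial.support_mul p q hm')
    simpa using hp.add_lt_add_of_ne hq ha hb (by rintro ⟨rfl, rfl⟩; exact hne rfl)

lemma neg [CommRing R] {p : MvPolynomial σ R} {m : σ →₀ ℕ} (hp : IsMinWeightMonomial w p m) :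
    IsMinWeightMonomial w (-p) m := by
  simpa [IsMinWeightMonomial] using hp

lemma multiset_prod {ι : Type*} [IsOrderedCancelAddMonoid M] [CommSemiring R] [NoZeroDivisors R]
    [Nontrivial R]
    {f : ι → MvPolynomial σ R} {g : ι → σ →₀ ℕ} {s : Multiset ι}
    (h : ∀ i ∈ s, IsMinWeightMonomial w (f i) (g i)) :
    IsMinWeightMonomial w (s.map f).prod (s.map g).sum := by
  induction s using Multiset.induction_on with
  | empty => simp [IsMinWeightMonomial]
  | cons i s ih =>
    simpa using (h i (Multiset.mem_cons_self i s)).mul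
      (ih fun j hj => h j (Multiset.mem_cons_of_mem hj))

end IsMinWeightMonomial

/-- Triangularity: in a linear relation, the coefficient of the lightest of the monomials `m i`
isolates a single term. -/
theorem linearIndependent_of_isMinWeightMonomial {ι : Type*} [CommRing R] [NoZeroDivisors R]
    {w : (σ →₀ ℕ) →+ M} {p : ι → MvPolynomial σ R} {m : ι → σ →₀ ℕ}
    (hp : ∀ i, IsMinWeightMonomial w (p i) (m i)) (hm : Function.Injective m) :
    LinearIndependent R p := by
  classical
  refine linearIndependent_iff'.mpr fun s g hsum i hi => by_contra fun hgi => ?_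
  obtain ⟨i₀, hi₀, hmin⟩ := (s.filter (g · ≠ 0)).exists_min_image (fun j => w (m j))
    ⟨i, Finset.mem_filter.mpr ⟨hi, hgi⟩⟩
  obtain ⟨hi₀s, hgi₀⟩ := Finset.mem_filter.mp hi₀
  have hcoeff := congrArg (MvPolynomial.coeff (m i₀)) hsum
  simp only [MvPolynomial.coeff_sum, MvPolynomial.coeff_smul, smul_eq_mul,
    MvPolynomial.coeff_zero] at hcoeff
  rw [Finset.sum_eq_single i₀ (fun j hj hji₀ => ?_) (fun h => (h hi₀s).elim)] at hcoeff
  · exact mul_ne_zero hgi₀ (hp i₀).1 hcoeff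
  by_contra hne
  have hsupp := MvPolynomial.mem_support_iff.mpr (right_ne_zero_of_mul hne)
  have hlt := (hp j).2 _ hsupp (hm.ne hji₀.symm)
  exact (hmin j (Finset.mem_filter.mpr ⟨hj, left_ne_zero_of_mul hne⟩)).not_gt hlt

end MinWeight

section Intervals

variable {β : Type*} [LinearOrder β]

def IntervalsNoncrossing (s : Multiset (β × β)) : Prop :=
  ∀ e f, {e, f} ≤ s → ¬ (e.1 < f.1 ∧ f.1 < e.2 ∧ e.2 < f.2)

lemma IntervalsNoncrossing.mono {s t : Multiset (β × β)} (ht : IntervalsNoncrossing t)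
    (hst : s ≤ t) : IntervalsNoncrossing s :=
  fun e f hef => ht e f (hef.trans hst)

/-- An interval `(h, c)` with `h < o` would cross the interval starting at `o`. -/
lemma IntervalsNoncrossing.mem_of_isLeast_of_isGreatest {s : Multiset (β × β)}
    (hs : ∀ e ∈ s, e.1 < e.2) (hn : IntervalsNoncrossing s) {o c : β}
    (hc : IsLeast {y | y ∈ s.map Prod.snd} c) (ho : IsGreatest {x | x ∈ s.map Prod.fst ∧ x < c} o) :
    (o, c) ∈ s := by
  obtain ⟨⟨h, hh, rfl⟩, hcmin⟩ := And.imp_left Multiset.mem_map.mp hc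
  obtain ⟨⟨⟨g, hg, rfl⟩, hoc⟩, homax⟩ := And.imp_left (And.imp_left Multiset.mem_map.mp) ho
  have hho : h.1 ≤ g.1 := homax ⟨Multiset.mem_map_of_mem _ hh, hs h hh⟩
  have hcg : h.2 ≤ g.2 := hcmin (Multiset.mem_map_of_mem _ hg)
  rcases hho.lt_or_eq with hho | hho
  · rcases hcg.lt_or_eq with hcg | hcg
    · have hne : h ≠ g := by rintro rfl; exact hho.ne rfl
      exact (hn h g (Multiset.pair_le_iff.mpr ⟨hh, (Multiset.mem_erase_of_ne hne.symm).mpr hg⟩)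
        ⟨hho, hoc, hcg⟩).elim
    · rwa [hcg]
  · rwa [← hho]

theorem IntervalsNoncrossing.eq_of_map_eq {s t : Multiset (β × β)} (hs : ∀ e ∈ s, e.1 < e.2)
    (ht : ∀ e ∈ t, e.1 < e.2) (hsn : IntervalsNoncrossing s) (htn : IntervalsNoncrossing t)
    (hfst : s.map Prod.fst = t.map Prod.fst) (hsnd : s.map Prod.snd = t.map Prod.snd) :
    s = t := by
  induction s using Multiset.strongInductionOn generalizing t with
  | ih s ih =>
  rcases eq_or_ne s 0 with rfl | hs0
  · exact (Multiset.map_eq_zero.mp (hfst.symm.trans (Multiset.map_zero _))).symm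
  obtain ⟨h, hh, hhmin⟩ := Multiset.exists_min_image Prod.snd hs0
  have hh' : h ∈ s.filter (·.1 < h.2) := Multiset.mem_filter.mpr ⟨hh, hs h hh⟩
  obtain ⟨g, hg, hgmax⟩ :=
    Multiset.exists_max_image Prod.fst fun h0 => Multiset.notMem_zero h (h0 ▸ hh')
  obtain ⟨hg, hgc⟩ := Multiset.mem_filter.mp hg
  have hc : IsLeast {y | y ∈ s.map Prod.snd} h.2 := by
    refine ⟨Multiset.mem_map_of_mem _ hh, fun y hy => ?_⟩
    obtain ⟨e, he, rfl⟩ := Multiset.mem_map.mp hy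
    exact hhmin e he
  have ho : IsGreatest {x | x ∈ s.map Prod.fst ∧ x < h.2} g.1 := by
    refine ⟨⟨Multiset.mem_map_of_mem _ hg, hgc⟩, fun x ⟨hx, hxc⟩ => ?_⟩
    obtain ⟨e, he, rfl⟩ := Multiset.mem_map.mp hx
    exact hgmax e (Multiset.mem_filter.mpr ⟨he, hxc⟩)
  have hmem := hsn.mem_of_isLeast_of_isGreatest hs hc ho
  have hmem' := htn.mem_of_isLeast_of_isGreatest ht (hsnd ▸ hc) (hfst ▸ ho)
  rw [← Multiset.cons_erase hmem, ← Multiset.cons_erase hmem']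
  congr 1
  refine ih _ (Multiset.erase_lt.mpr hmem) (fun e he => hs e (Multiset.mem_of_mem_erase he))
    (fun e he => ht e (Multiset.mem_of_mem_erase he)) (hsn.mono (Multiset.erase_le _ _))
    (htn.mono (Multiset.erase_le _ _)) ?_ ?_
  · rw [Multiset.map_erase_of_mem _ _ hmem, Multiset.map_erase_of_mem _ _ hmem', hfst]
  · rw [Multiset.map_erase_of_mem _ _ hmem, Multiset.map_erase_of_mem _ _ hmem', hsnd]

end Intervals

section ChordGeometry

open EuclideanGeometry

variable {V : Type*} [NormedAddCommGroup V] [InnerProductSpace ℝ V]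

/-- Three distinct points of a sphere are not collinear. -/
lemma dist_lt_dist_add_dist_of_mem_openSegment {p q s z : V}
    (hcos : Cospherical ({p, q, s} : Set V)) (hpq : p ≠ q) (hps : p ≠ s) (hqs : q ≠ s)
    (hz : z ∈ openSegment ℝ p q) : dist p s < dist p z + dist z s := by
  refine (dist_triangle p z s).lt_of_ne fun heq => ?_
  have hzp : p ≠ z := fun h => hpq (left_mem_openSegment_iff.mp (by rwa [← h] at hz))
  have hpzq := (mem_segment_iff_wbtw.mp (openSegment_subset_segment ℝ p q hz)).collinear
  have hpzs := (dist_add_dist_eq_iff.mp heq.symm).collinear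
  have hq : q ∈ line[ℝ, p, z] := hpzq.mem_affineSpan_of_mem_of_ne (by simp) (by simp) (by simp) hzp
  have hs : s ∈ line[ℝ, p, z] := hpzs.mem_affineSpan_of_mem_of_ne (by simp) (by simp) (by simp) hzp
  refine affineIndependent_iff_not_collinear_set.mp (hcos.affineIndependent_of_ne hpq hps hqs) ?_
  exact (collinear_insert_insert_of_mem_affineSpan_pair hq hs).subset (by
    intro x hx; simp only [Set.mem_insert_iff, Set.mem_singleton_iff] at hx ⊢; tauto)

lemma dist_add_dist_lt_of_chords_cross {p q r s z : V}
    (hcos : Cospherical ({p, q, r, s} : Set V)) (hpq : p ≠ q) (hps : p ≠ s) (hqs : q ≠ s)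
    (hrs : r ≠ s) (hrq : r ≠ q) (hz₁ : z ∈ openSegment ℝ p q) (hz₂ : z ∈ openSegment ℝ r s) :
    dist p s + dist r q < dist p q + dist r s := by
  have h₁ := dist_lt_dist_add_dist_of_mem_openSegment (hcos.subset (by
    intro x hx; simp only [Set.mem_insert_iff, Set.mem_singleton_iff] at hx ⊢; tauto))
    hpq hps hqs hz₁
  have h₂ := dist_lt_dist_add_dist_of_mem_openSegment (hcos.subset (by
    intro x hx; simp only [Set.mem_insert_iff, Set.mem_singleton_iff] at hx ⊢; tauto))
    hrs hrq hqs.symm hz₂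
  have h₃ := dist_add_dist_of_mem_segment (openSegment_subset_segment ℝ p q hz₁)
  have h₄ := dist_add_dist_of_mem_segment (openSegment_subset_segment ℝ r s hz₂)
  linarith

end ChordGeometry

section Plane

open Real

local notation "E²" => EuclideanSpace ℝ (Fin 2)

/-- Twice the signed area of the triangle `pqr`. -/
def signedArea (p q r : E²) : ℝ := (q 0 - p 0) * (r 1 - p 1) - (q 1 - p 1) * (r 0 - p 0)

lemma div_sub_mem_Ioo {a b : ℝ} (h : a * b < 0) : a / (a - b) ∈ Set.Ioo (0 : ℝ) 1 := by
  rcases mul_neg_iff.mp h with ⟨ha, hb⟩ | ⟨ha, hb⟩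
  · exact ⟨div_pos ha (by linarith), (div_lt_one (by linarith)).mpr (by linarith)⟩
  · exact ⟨div_pos_of_neg_of_neg ha (by linarith),
      (div_lt_one_of_neg (by linarith)).mpr (by linarith)⟩

/-- The common point is given by Cramer's rule. -/
lemma openSegment_inter_nonempty_of_signedArea {p q r s : E²}
    (h₁ : signedArea p q r * signedArea p q s < 0) (h₂ : signedArea r s p * signedArea r s q < 0) :
    (openSegment ℝ p q ∩ openSegment ℝ r s).Nonempty := by
  have ht := div_sub_mem_Ioo h₂
  have hu := div_sub_mem_Ioo h₁
  have hne₁ : signedArea p q r - signedArea p q s ≠ 0 := by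
    intro h; rw [sub_eq_zero.mp h] at h₁; nlinarith
  have hne₂ : signedArea r s p - signedArea r s q ≠ 0 := by
    intro h; rw [sub_eq_zero.mp h] at h₂; nlinarith
  rw [openSegment_eq_image', openSegment_eq_image']
  refine ⟨_, ⟨_, ht, rfl⟩, _, hu, ?_⟩
  simp only [signedArea] at hne₁ hne₂ ⊢
  ext i
  fin_cases i <;> simp <;> field_simp <;> ring

def planeArg (x : E²) : ℝ := Complex.arg (Complex.orthonormalBasisOneI.repr.symm x)

lemma planeArg_mem_Ioc (x : E²) : planeArg x ∈ Set.Ioc (-π) π := Complex.arg_mem_Ioc _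

lemma cos_planeArg {x : E²} (hx : ‖x‖ = 1) : cos (planeArg x) = x 0 := by
  have hn : ‖Complex.orthonormalBasisOneI.repr.symm x‖ = 1 :=
    (Complex.orthonormalBasisOneI.repr.symm.norm_map x).trans hx
  rw [planeArg, Complex.cos_arg (norm_ne_zero_iff.mp (hn ▸ one_ne_zero)), hn]
  simp

lemma sin_planeArg {x : E²} (hx : ‖x‖ = 1) : sin (planeArg x) = x 1 := by
  have hn : ‖Complex.orthonormalBasisOneI.repr.symm x‖ = 1 :=
    (Complex.orthonormalBasisOneI.repr.symm.norm_map x).trans hx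
  rw [planeArg, Complex.sin_arg, hn]
  simp

lemma planeArg_injOn : Set.InjOn planeArg (Metric.sphere (0 : E²) 1) := fun x hx y hy h =>
  Complex.orthonormalBasisOneI.repr.symm.injective <|
    Complex.ext_norm_arg
      (by simp_all only [LinearIsometryEquiv.norm_map, mem_sphere_zero_iff_norm]) h

lemma signedArea_eq_sin_mul {p q r : E²} (hp : ‖p‖ = 1) (hq : ‖q‖ = 1) (hr : ‖r‖ = 1) :
    signedArea p q r = 4 * sin ((planeArg q - planeArg p) / 2) *
      sin ((planeArg r - planeArg q) / 2) * sin ((planeArg r - planeArg p) / 2) := by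
  rw [signedArea, ← cos_planeArg hp, ← cos_planeArg hq, ← cos_planeArg hr,
    ← sin_planeArg hp, ← sin_planeArg hq, ← sin_planeArg hr, cos_sub_cos, sin_sub_sin,
    cos_sub_cos, sin_sub_sin,
    show (planeArg r - planeArg q) / 2 =
      (planeArg r + planeArg p) / 2 - (planeArg q + planeArg p) / 2 by ring, sin_sub]
  ring

lemma sin_half_sub_pos {x y : ℝ} (hx : x ∈ Set.Ioc (-π) π) (hy : y ∈ Set.Ioc (-π) π)
    (h : y < x) : 0 < sin ((x - y) / 2) :=
  sin_pos_of_pos_of_lt_pi (by linarith) (by linarith [hx.2, hy.1])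

lemma sin_half_sub_neg {x y : ℝ} (hx : x ∈ Set.Ioc (-π) π) (hy : y ∈ Set.Ioc (-π) π)
    (h : x < y) : sin ((x - y) / 2) < 0 := by
  rw [show (x - y) / 2 = -((y - x) / 2) by ring, sin_neg, neg_lt_zero]
  exact sin_half_sub_pos hy hx h

lemma openSegment_inter_nonempty_of_planeArg_lt {a b c d : E²} (ha : ‖a‖ = 1) (hb : ‖b‖ = 1)
    (hc : ‖c‖ = 1) (hd : ‖d‖ = 1) (hac : planeArg a < planeArg c)
    (hcb : planeArg c < planeArg b) (hbd : planeArg b < planeArg d) :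
    (openSegment ℝ a b ∩ openSegment ℝ c d).Nonempty := by
  have ma := planeArg_mem_Ioc a
  have mb := planeArg_mem_Ioc b
  have mc := planeArg_mem_Ioc c
  have md := planeArg_mem_Ioc d
  have hba := sin_half_sub_pos mb ma (hac.trans hcb)
  have hcb' := sin_half_sub_neg mc mb hcb
  have hca := sin_half_sub_pos mc ma hac
  have hdb := sin_half_sub_pos md mb hbd
  have hda := sin_half_sub_pos md ma (hac.trans (hcb.trans hbd))
  have hdc := sin_half_sub_pos md mc (hcb.trans hbd)
  have had := sin_half_sub_neg ma md (hac.trans (hcb.trans hbd))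
  have hac' := sin_half_sub_neg ma mc hac
  have hbd' := sin_half_sub_neg mb md hbd
  have hbc := sin_half_sub_pos mb mc hcb
  apply openSegment_inter_nonempty_of_signedArea
  · rw [signedArea_eq_sin_mul ha hb hc, signedArea_eq_sin_mul ha hb hd]
    exact mul_neg_of_neg_of_pos (mul_neg_of_neg_of_pos (mul_neg_of_pos_of_neg
      (mul_pos four_pos hba) hcb') hca) (mul_pos (mul_pos (mul_pos four_pos hba) hdb) hda)
  · rw [signedArea_eq_sin_mul hc hd ha, signedArea_eq_sin_mul hc hd hb]
    exact mul_neg_of_pos_of_neg (mul_pos_of_neg_of_neg (mul_neg_of_pos_of_neg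
      (mul_pos four_pos hdc) had) hac') (mul_neg_of_neg_of_pos (mul_neg_of_pos_of_neg
      (mul_pos four_pos hdc) hbd') hbc)

end Plane

namespace HMSV

section Chords

variable {α : Type}

def chordLength {E : Type*} [PseudoMetricSpace E] (ι : α → E) (Γ : Graph α) : ℝ :=
  (Γ.map fun e => dist (ι e.1) (ι e.2)).sum

lemma chordLength_add_pair {E : Type*} [PseudoMetricSpace E] (ι : α → E) (Γ : Graph α)
    (e f : α × α) :
    chordLength ι (Γ + {e, f}) =
      chordLength ι Γ + dist (ι e.1) (ι e.2) + dist (ι f.1) (ι f.2) := by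
  simp only [chordLength, Multiset.map_add, Multiset.sum_add, Multiset.insert_eq_cons,
    Multiset.map_cons, Multiset.map_singleton, Multiset.sum_cons, Multiset.sum_singleton]
  ring

def orient (θ : α → ℝ) (e : α × α) : α × α := if θ e.1 < θ e.2 then e else e.swap

lemma orient_lt {θ : α → ℝ} {e : α × α} (h : θ e.1 ≠ θ e.2) :
    θ (orient θ e).1 < θ (orient θ e).2 := by
  unfold orient
  split_ifs with h'
  exacts [h', lt_of_le_of_ne (not_lt.mp h') h.symm]

lemma und_orient (θ : α → ℝ) (e : α × α) : und (orient θ e) = und e := by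
  unfold orient und
  split_ifs
  exacts [rfl, Sym2.eq_swap]

lemma undG_eq_map_orient (θ : α → ℝ) (Γ : Graph α) : undG Γ = (Γ.map (orient θ)).map und := by
  simp [undG, Multiset.map_map, und_orient]

lemma crosses_swap_left {ι : α → EuclideanSpace ℝ (Fin 2)} {e f : α × α} :
    Crosses ι e.swap f ↔ Crosses ι e f := by
  simp only [Crosses, Prod.fst_swap, Prod.snd_swap, openSegment_symm ℝ (ι e.2)]
  tauto

lemma crosses_swap_right {ι : α → EuclideanSpace ℝ (Fin 2)} {e f : α × α} :
    Crosses ι e f.swap ↔ Crosses ι e f := by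
  simp only [Crosses, Prod.fst_swap, Prod.snd_swap, openSegment_symm ℝ (ι f.2)]
  tauto

lemma crosses_orient_iff {ι : α → EuclideanSpace ℝ (Fin 2)} {θ : α → ℝ} {e f : α × α} :
    Crosses ι (orient θ e) (orient θ f) ↔ Crosses ι e f := by
  unfold orient
  split_ifs <;> simp only [crosses_swap_left, crosses_swap_right]

def angleIntervals (θ : α → ℝ) (Γ : Graph α) : Multiset (ℝ × ℝ) :=
  (Γ.map (orient θ)).map (Prod.map θ θ)

lemma map_fst_angleIntervals (θ : α → ℝ) (Γ : Graph α) :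
    (angleIntervals θ Γ).map Prod.fst = ((Γ.map (orient θ)).map Prod.fst).map θ := by
  simp only [angleIntervals, Multiset.map_map]
  rfl

lemma map_snd_angleIntervals (θ : α → ℝ) (Γ : Graph α) :
    (angleIntervals θ Γ).map Prod.snd = ((Γ.map (orient θ)).map Prod.snd).map θ := by
  simp only [angleIntervals, Multiset.map_map]
  rfl

lemma map_orient_mem_product {L : Finset α} (θ : α → ℝ) {Γ : Graph α}
    (hΓL : ∀ e ∈ Γ, e.1 ∈ L ∧ e.2 ∈ L) :
    ∀ x ∈ Γ.map (orient θ), x ∈ (L : Set α) ×ˢ (L : Set α) := by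
  simp only [Multiset.mem_map]
  rintro _ ⟨e, he, rfl⟩
  unfold orient
  split_ifs <;> simp [hΓL e he]

lemma planeArg_comp_injOn {L : Finset α} {ι : α → EuclideanSpace ℝ (Fin 2)}
    (hinj : Set.InjOn ι L) (hcirc : ∀ a ∈ L, ‖ι a‖ = 1) : Set.InjOn (planeArg ∘ ι) L :=
  planeArg_injOn.comp hinj fun a ha => mem_sphere_zero_iff_norm.mpr (hcirc a ha)

lemma IsPlanarOn.planeArg_ne {L : Finset α} {ι : α → EuclideanSpace ℝ (Fin 2)}
    (hinj : Set.InjOn ι L) (hcirc : ∀ a ∈ L, ‖ι a‖ = 1) {Γ : Graph α}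
    (hΓL : ∀ e ∈ Γ, e.1 ∈ L ∧ e.2 ∈ L) (hΓ : IsPlanarOn ι Γ) {e : α × α} (he : e ∈ Γ) :
    (planeArg ∘ ι) e.1 ≠ (planeArg ∘ ι) e.2 :=
  fun h => hΓ.1 e he (planeArg_comp_injOn hinj hcirc (hΓL e he).1 (hΓL e he).2 h)

lemma IsPlanarOn.angleIntervals_lt {L : Finset α} {ι : α → EuclideanSpace ℝ (Fin 2)}
    (hinj : Set.InjOn ι L) (hcirc : ∀ a ∈ L, ‖ι a‖ = 1) {Γ : Graph α}
    (hΓL : ∀ e ∈ Γ, e.1 ∈ L ∧ e.2 ∈ L) (hΓ : IsPlanarOn ι Γ) :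
    ∀ x ∈ angleIntervals (planeArg ∘ ι) Γ, x.1 < x.2 := by
  simp only [angleIntervals, Multiset.map_map, Multiset.mem_map]
  rintro _ ⟨e, he, rfl⟩
  exact orient_lt (hΓ.planeArg_ne hinj hcirc hΓL he)

lemma IsPlanarOn.angleIntervals_noncrossing {L : Finset α} {ι : α → EuclideanSpace ℝ (Fin 2)}
    (hcirc : ∀ a ∈ L, ‖ι a‖ = 1) {Γ : Graph α} (hΓL : ∀ e ∈ Γ, e.1 ∈ L ∧ e.2 ∈ L)
    (hΓ : IsPlanarOn ι Γ) : IntervalsNoncrossing (angleIntervals (planeArg ∘ ι) Γ) := by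
  set θ := planeArg ∘ ι
  rintro x y hxy ⟨h₁, h₂, h₃⟩
  rw [angleIntervals, Multiset.map_map] at hxy
  obtain ⟨e, f, hef, rfl, rfl⟩ := Multiset.exists_pair_le_of_pair_le_map _ hxy
  simp only [Function.comp_apply, Prod.map_fst, Prod.map_snd] at h₁ h₂ h₃
  have hL (v : α) (hv : v = (orient θ e).1 ∨ v = (orient θ e).2 ∨ v = (orient θ f).1 ∨
      v = (orient θ f).2) : ‖ι v‖ = 1 := by
    have he := hΓL e (Multiset.mem_of_le hef (by simp))
    have hf := hΓL f (Multiset.mem_of_le hef (by simp))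
    unfold orient at hv
    split_ifs at hv <;> rcases hv with rfl | rfl | rfl | rfl <;> simp_all
  have hne {u v : α} (h : θ u < θ v) : u ≠ v := by rintro rfl; exact lt_irrefl _ h
  refine hΓ.2 e f hef (crosses_orient_iff.mp ⟨hne h₁, (hne (h₁.trans (h₂.trans h₃))),
    (hne h₂).symm, hne h₃, openSegment_inter_nonempty_of_planeArg_lt (hL _ (by simp))
    (hL _ (by simp)) (hL _ (by simp)) (hL _ (by simp)) h₁ h₂ h₃⟩)

end Chords

section PlueckerPolynomial

variable {α : Type}

/-- The Plücker coordinate `x_a y_b - x_b y_a` of the edge `(a, b)`, where `x_v = X (v, 0)` and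
`y_v = X (v, 1)` are the coordinates of a generic vector attached to the vertex `v`. -/
def edgePoly (e : α × α) : MvPolynomial (α × Fin 2) ℤ :=
  MvPolynomial.X (e.1, 0) * MvPolynomial.X (e.2, 1) -
    MvPolynomial.X (e.2, 0) * MvPolynomial.X (e.1, 1)

def graphPoly (Γ : Graph α) : MvPolynomial (α × Fin 2) ℤ := (Γ.map edgePoly).prod

/-- The exponent of the monomial `x_a y_b`. -/
def edgeMonomial (e : α × α) : α × Fin 2 →₀ ℕ :=
  Finsupp.single (e.1, 0) 1 + Finsupp.single (e.2, 1) 1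

def xWeight (θ : α → ℝ) : (α × Fin 2 →₀ ℕ) →+ ℝ :=
  Finsupp.weight fun v => if v.2 = 0 then θ v.1 else 0

lemma xWeight_edgeMonomial (θ : α → ℝ) (e : α × α) : xWeight θ (edgeMonomial e) = θ e.1 := by
  simp [xWeight, edgeMonomial, Finsupp.weight_single]

def lowMonomial (θ : α → ℝ) (Γ : Graph α) : α × Fin 2 →₀ ℕ :=
  ((Γ.map (orient θ)).map edgeMonomial).sum

lemma edgePoly_swap (e : α × α) : edgePoly e.swap = -edgePoly e := by
  simp only [edgePoly, Prod.fst_swap, Prod.snd_swap]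
  ring

lemma isMinWeightMonomial_edgePoly_of_lt {θ : α → ℝ} {e : α × α} (h : θ e.1 < θ e.2) :
    IsMinWeightMonomial (xWeight θ) (edgePoly e) (edgeMonomial e) := by
  classical
  have hne : edgeMonomial e ≠ edgeMonomial e.swap := fun h' => h.ne <| by
    simpa [xWeight_edgeMonomial] using congrArg (xWeight θ) h'
  have hpoly : edgePoly e = MvPolynomial.monomial (edgeMonomial e) 1
      - MvPolynomial.monomial (edgeMonomial e.swap) 1 := by
    simp [edgePoly, edgeMonomial, MvPolynomial.X, MvPolynomial.monomial_mul]
  rw [hpoly]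
  refine ⟨by simp [MvPolynomial.coeff_monomial, hne.symm], fun m hm hme => ?_⟩
  have hm' : m = edgeMonomial e.swap := by
    by_contra hm'
    simp [MvPolynomial.coeff_monomial, Ne.symm hme, Ne.symm hm'] at hm
  rw [hm', xWeight_edgeMonomial, xWeight_edgeMonomial]
  exact h

lemma isMinWeightMonomial_edgePoly {θ : α → ℝ} {e : α × α} (h : θ e.1 ≠ θ e.2) :
    IsMinWeightMonomial (xWeight θ) (edgePoly e) (edgeMonomial (orient θ e)) := by
  unfold orient
  split_ifs with h'
  · exact isMinWeightMonomial_edgePoly_of_lt h'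
  · simpa [edgePoly_swap] using (isMinWeightMonomial_edgePoly_of_lt (θ := θ) (e := e.swap)
      (lt_of_le_of_ne (not_lt.mp h') h.symm)).neg

lemma isMinWeightMonomial_graphPoly {θ : α → ℝ} {Γ : Graph α} (h : ∀ e ∈ Γ, θ e.1 ≠ θ e.2) :
    IsMinWeightMonomial (xWeight θ) (graphPoly Γ) (lowMonomial θ Γ) := by
  rw [lowMonomial, Multiset.map_map]
  exact IsMinWeightMonomial.multiset_prod fun e he => isMinWeightMonomial_edgePoly (h e he)

lemma sum_edgeMonomial_apply [DecidableEq α] (s : Multiset (α × α)) (v : α) :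
    (s.map edgeMonomial).sum (v, 0) = (s.map Prod.fst).count v ∧
      (s.map edgeMonomial).sum (v, 1) = (s.map Prod.snd).count v := by
  induction s using Multiset.induction_on with
  | empty => simp
  | cons e s ih =>
    obtain ⟨ih₀, ih₁⟩ := ih
    simp only [Multiset.map_cons, Multiset.sum_cons, Finsupp.add_apply, Multiset.count_cons, ih₀,
      ih₁, edgeMonomial, Finsupp.single_apply, Prod.mk.injEq, and_true,
      Fin.one_eq_zero_iff, Fin.zero_eq_one_iff]
    constructor <;> split_ifs <;> grind

lemma map_eq_of_sum_edgeMonomial_eq {s t : Multiset (α × α)}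
    (h : (s.map edgeMonomial).sum = (t.map edgeMonomial).sum) :
    s.map Prod.fst = t.map Prod.fst ∧ s.map Prod.snd = t.map Prod.snd := by
  classical
  refine ⟨Multiset.ext.mpr fun v => ?_, Multiset.ext.mpr fun v => ?_⟩
  · rw [← (sum_edgeMonomial_apply s v).1, ← (sum_edgeMonomial_apply t v).1, h]
  · rw [← (sum_edgeMonomial_apply s v).2, ← (sum_edgeMonomial_apply t v).2, h]

/-- The lowest monomial records the left and right endpoints of the angle-sorted edges, and these
determine a non-crossing system of intervals. -/
theorem undG_eq_of_lowMonomial_eq {L : Finset α} {ι : α → EuclideanSpace ℝ (Fin 2)}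
    (hinj : Set.InjOn ι L) (hcirc : ∀ a ∈ L, ‖ι a‖ = 1) {Γ Δ : Graph α}
    (hΓL : ∀ e ∈ Γ, e.1 ∈ L ∧ e.2 ∈ L) (hΔL : ∀ e ∈ Δ, e.1 ∈ L ∧ e.2 ∈ L)
    (hΓ : IsPlanarOn ι Γ) (hΔ : IsPlanarOn ι Δ)
    (h : lowMonomial (planeArg ∘ ι) Γ = lowMonomial (planeArg ∘ ι) Δ) : undG Γ = undG Δ := by
  obtain ⟨hfst, hsnd⟩ := map_eq_of_sum_edgeMonomial_eq h
  have hint := IntervalsNoncrossing.eq_of_map_eq (hΓ.angleIntervals_lt hinj hcirc hΓL)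
    (hΔ.angleIntervals_lt hinj hcirc hΔL) (hΓ.angleIntervals_noncrossing hcirc hΓL)
    (hΔ.angleIntervals_noncrossing hcirc hΔL)
    (by rw [map_fst_angleIntervals, map_fst_angleIntervals, hfst])
    (by rw [map_snd_angleIntervals, map_snd_angleIntervals, hsnd])
  have hθ := planeArg_comp_injOn hinj hcirc
  rw [undG_eq_map_orient (planeArg ∘ ι), undG_eq_map_orient (planeArg ∘ ι),
    Multiset.eq_of_map_eq_of_injOn (hθ.prodMap hθ) (map_orient_mem_product _ hΓL)
      (map_orient_mem_product _ hΔL) hint]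

def graphPolyHom : Multiplicative (Graph α) →* MvPolynomial (α × Fin 2) ℤ where
  toFun Γ := graphPoly Γ.toAdd
  map_one' := by simp [graphPoly]
  map_mul' Γ Δ := by simp [graphPoly]

end PlueckerPolynomial

variable {α : Type} [DecidableEq α]

lemma X_eq_zero_of_loop {Γ : Graph α} {v : α} (h : (v, v) ∈ Γ) : X Γ = 0 :=
  Ideal.Quotient.eq_zero_iff_mem.mpr <| Ideal.subset_span <| .inl <| .inl ⟨Γ, v, h, rfl⟩

lemma X_add_singleton_swap (Γ : Graph α) (a b : α) :
    X (Γ + {(a, b)}) = - X (Γ + {(b, a)}) := by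
  have h : sgl (Γ + {(a, b)}) + sgl (Γ + {(b, a)}) ∈ relIdeal α :=
    Ideal.subset_span <| .inl <| .inr ⟨Γ, a, b, rfl⟩
  exact eq_neg_of_add_eq_zero_left <| by
    simpa only [X, map_add] using Ideal.Quotient.eq_zero_iff_mem.mpr h

lemma X_pluecker (Γ : Graph α) (a b c d : α) :
    X (Γ + {(a, b), (c, d)}) = X (Γ + {(a, d), (c, b)}) + X (Γ + {(a, c), (b, d)}) := by
  have h : sgl (Γ + {(a, b), (c, d)}) - sgl (Γ + {(a, d), (c, b)})
      - sgl (Γ + {(a, c), (b, d)}) ∈ relIdeal α :=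
    Ideal.subset_span <| .inr ⟨Γ, a, b, c, d, rfl⟩
  rw [← sub_eq_zero, sub_add_eq_sub_sub]
  simpa only [X, map_sub] using Ideal.Quotient.eq_zero_iff_mem.mpr h

lemma X_cons (e : α × α) (Γ : Graph α) :
    X (e ::ₘ Γ) = Ideal.Quotient.mk (relIdeal α) (sgl {e}) * X Γ := by
  simp only [X, sgl, ← map_mul, AddMonoidAlgebra.single_mul_single, mul_one,
    Multiset.singleton_add]

theorem X_eq_or_eq_neg_of_undG_eq {Γ Δ : Graph α} (h : undG Γ = undG Δ) :
    X Γ = X Δ ∨ X Γ = - X Δ := by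
  induction Γ using Multiset.induction_on generalizing Δ with
  | empty =>
    obtain rfl : Δ = 0 := Multiset.map_eq_zero.mp h.symm
    exact .inl rfl
  | cons e Γ ih =>
    have he : und e ∈ undG Δ := h ▸ Multiset.mem_map_of_mem und (Multiset.mem_cons_self e Γ)
    obtain ⟨f, hf, hfe⟩ := Multiset.mem_map.mp he
    obtain ⟨Δ, rfl⟩ := Multiset.exists_cons_of_mem hf
    have hrest := ih (Δ := Δ) (by simpa [undG, hfe] using h)
    rcases Sym2.eq_iff.mp hfe with ⟨h₁, h₂⟩ | ⟨h₁, h₂⟩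
    · obtain rfl : f = e := Prod.ext h₁ h₂
      rcases hrest with h' | h'
      · exact .inl (by rw [X_cons, X_cons, h'])
      · exact .inr (by rw [X_cons, X_cons, h']; ring)
    · obtain rfl : f = (e.2, e.1) := Prod.ext h₁ h₂
      have hswap : X ((e.2, e.1) ::ₘ Δ) = - X (e ::ₘ Δ) := by
        simpa [add_comm _ {_}] using X_add_singleton_swap Δ e.2 e.1
      rw [hswap, neg_neg]
      rcases hrest with h' | h'
      · exact .inr (by rw [X_cons, X_cons, h'])
      · exact .inl (by rw [X_cons, X_cons, h']; ring)

lemma IsRegOn.mem_of_mem {L : Finset α} {Γ : Graph α} {k : ℕ} (h : IsRegOn L Γ k)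
    {e : α × α} (he : e ∈ Γ) : e.1 ∈ L ∧ e.2 ∈ L := by
  have hdeg (v : α) (hv : v ∉ L) := Nat.add_eq_zero_iff.mp (h.2 v hv)
  refine ⟨by_contra fun hv => ?_, by_contra fun hv => ?_⟩
  · exact Multiset.count_eq_zero.mp (hdeg _ hv).1 (Multiset.mem_map_of_mem _ he)
  · exact Multiset.count_eq_zero.mp (hdeg _ hv).2 (Multiset.mem_map_of_mem _ he)

/-- An edge of a `k`-regular graph has multiplicity at most `k`. -/
lemma IsRegOn.le_nsmul {L : Finset α} {Γ : Graph α} {k : ℕ} (h : IsRegOn L Γ k) :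
    Γ ≤ k • (L ×ˢ L).val := by
  refine Multiset.le_iff_count.mpr fun e => ?_
  by_cases he : e ∈ Γ
  · obtain ⟨h₁, h₂⟩ := h.mem_of_mem he
    rw [Multiset.count_nsmul, Multiset.count_eq_one_of_mem (L ×ˢ L).nodup (by simp [h₁, h₂]),
      mul_one, ← h.1 e.1 h₁, deg]
    refine le_trans ?_ (Nat.le_add_right _ _)
    rw [Multiset.le_count_iff_replicate_le, ← Multiset.map_replicate]
    exact Multiset.map_le_map (Multiset.le_count_iff_replicate_le.mp le_rfl)
  · simp [Multiset.count_eq_zero_of_notMem he]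

lemma deg_pluecker (a b c d v : α) :
    deg ({(a, d), (c, b)} : Graph α) v = deg {(a, b), (c, d)} v ∧
      deg ({(a, c), (b, d)} : Graph α) v = deg {(a, b), (c, d)} v := by
  simp only [deg, Multiset.insert_eq_cons, Multiset.map_cons, Multiset.map_singleton,
    Multiset.count_cons, Multiset.count_singleton]
  constructor <;> omega

lemma IsRegOn.of_deg_eq {L : Finset α} {Γ Γ' : Graph α} {k : ℕ} (h : IsRegOn L Γ k)
    (hdeg : ∀ v, deg Γ' v = deg Γ v) : IsRegOn L Γ' k :=
  ⟨fun v hv => (hdeg v).trans (h.1 v hv), fun v hv => (hdeg v).trans (h.2 v hv)⟩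

lemma IsRegOn.pluecker {L : Finset α} {Γ : Graph α} {k : ℕ} {a b c d : α}
    (h : IsRegOn L (Γ + {(a, b), (c, d)}) k) :
    IsRegOn L (Γ + {(a, d), (c, b)}) k ∧ IsRegOn L (Γ + {(a, c), (b, d)}) k :=
  ⟨h.of_deg_eq fun v => by rw [deg_add, deg_add, (deg_pluecker a b c d v).1],
    h.of_deg_eq fun v => by rw [deg_add, deg_add, (deg_pluecker a b c d v).2]⟩

lemma chordLength_pluecker_lt {L : Finset α} {ι : α → EuclideanSpace ℝ (Fin 2)}
    (hinj : Set.InjOn ι L) (hcirc : ∀ a ∈ L, ‖ι a‖ = 1) {Γ : Graph α} {k : ℕ} {a b c d : α}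
    (hreg : IsRegOn L (Γ + {(a, b), (c, d)}) k) (hab : a ≠ b) (hcd : c ≠ d)
    (hcr : Crosses ι (a, b) (c, d)) :
    chordLength ι (Γ + {(a, d), (c, b)}) < chordLength ι (Γ + {(a, b), (c, d)}) ∧
      chordLength ι (Γ + {(a, c), (b, d)}) < chordLength ι (Γ + {(a, b), (c, d)}) := by
  obtain ⟨hac, had, hbc, hbd, z, hz₁, hz₂⟩ := hcr
  have hL : ∀ v ∈ ({a, b, c, d} : Finset α), v ∈ L := by
    have h₁ := hreg.mem_of_mem (e := (a, b)) (by simp)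
    have h₂ := hreg.mem_of_mem (e := (c, d)) (by simp)
    simp_all
  have hne {u v : α} (hu : u ∈ ({a, b, c, d} : Finset α)) (hv : v ∈ ({a, b, c, d} : Finset α))
      (huv : u ≠ v) : ι u ≠ ι v := fun h => huv (hinj (hL u hu) (hL v hv) h)
  have hcos : EuclideanGeometry.Cospherical ({ι a, ι b, ι c, ι d} : Set _) :=
    ⟨0, 1, by simp [hcirc _ (hL _ _)]⟩
  simp only [chordLength_add_pair]
  constructor
  · have := dist_add_dist_lt_of_chords_cross hcos (hne (by simp) (by simp) hab)
      (hne (by simp) (by simp) had) (hne (by simp) (by simp) hbd)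
      (hne (by simp) (by simp) hcd) (hne (by simp) (by simp) hbc.symm) hz₁ hz₂
    linarith
  · have := dist_add_dist_lt_of_chords_cross (Set.insert_comm (ι a) (ι b) _ ▸ hcos)
      (hne (by simp) (by simp) hab.symm) (hne (by simp) (by simp) hbd) (hne (by simp) (by simp) had)
      (hne (by simp) (by simp) hcd) (hne (by simp) (by simp) hac.symm)
      (openSegment_symm ℝ (ι a) (ι b) ▸ hz₁) hz₂
    rw [dist_comm (ι b) (ι a), dist_comm (ι c) (ι a)] at this
    linarith

/-- A natural-number measure along which Kempe's uncrossing terminates. -/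
def shorterCount {E : Type*} [PseudoMetricSpace E] (ι : α → E) (B Γ : Graph α) : ℕ :=
  (B.powerset.toFinset.filter fun Δ => chordLength ι Δ < chordLength ι Γ).card

lemma shorterCount_lt {E : Type*} [PseudoMetricSpace E] {ι : α → E} {B Γ Γ' : Graph α}
    (hB : Γ' ≤ B) (hl : chordLength ι Γ' < chordLength ι Γ) :
    shorterCount ι B Γ' < shorterCount ι B Γ := by
  refine Finset.card_lt_card ⟨Finset.monotone_filter_right _ fun Δ _ h => h.trans hl, fun h => ?_⟩
  exact lt_irrefl _ (Finset.mem_filter.mp (h (Finset.mem_filter.mpr ⟨by simpa using hB, hl⟩))).2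

def planarSpan (ι : α → EuclideanSpace ℝ (Fin 2)) (L : Finset α) : Submodule ℤ (RL α) :=
  Submodule.span ℤ {x | ∃ Γ k, IsRegOn L Γ k ∧ IsPlanarOn ι Γ ∧ x = X Γ}

theorem X_mem_planarSpan {L : Finset α} {ι : α → EuclideanSpace ℝ (Fin 2)}
    (hinj : Set.InjOn ι L) (hcirc : ∀ a ∈ L, ‖ι a‖ = 1) {Γ : Graph α} {k : ℕ}
    (hΓ : IsRegOn L Γ k) : X Γ ∈ planarSpan ι L := by
  induction hm : shorterCount ι (k • (L ×ˢ L).val) Γ using Nat.strong_induction_on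
    generalizing Γ with
  | _ m ih =>
  by_cases hloop : ∃ v, (v, v) ∈ Γ
  · obtain ⟨v, hv⟩ := hloop
    rw [X_eq_zero_of_loop hv]
    exact zero_mem _
  have hloop' : ∀ e ∈ Γ, e.1 ≠ e.2 := fun e he h =>
    hloop ⟨e.1, (Prod.ext rfl h.symm : e = (e.1, e.1)) ▸ he⟩
  by_cases hcross : ∃ e f, {e, f} ≤ Γ ∧ Crosses ι e f
  · obtain ⟨⟨a, b⟩, ⟨c, d⟩, hle, hcr⟩ := hcross
    obtain ⟨Γ₀, rfl⟩ : ∃ Γ₀, Γ = Γ₀ + {(a, b), (c, d)} := ⟨_, (tsub_add_cancel_of_le hle).symm⟩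
    have hab := hloop' (a, b) (by simp)
    have hcd := hloop' (c, d) (by simp)
    obtain ⟨hl₁, hl₂⟩ := chordLength_pluecker_lt hinj hcirc hΓ hab hcd hcr
    obtain ⟨hΓ₁, hΓ₂⟩ := hΓ.pluecker
    rw [X_pluecker]
    exact add_mem (ih _ (hm ▸ shorterCount_lt hΓ₁.le_nsmul hl₁) hΓ₁ rfl)
      (ih _ (hm ▸ shorterCount_lt hΓ₂.le_nsmul hl₂) hΓ₂ rfl)
  · exact Submodule.subset_span
      ⟨Γ, k, hΓ, ⟨hloop', fun e f hef hcr => hcross ⟨e, f, hef, hcr⟩⟩, rfl⟩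

theorem planarSpan_eq_RLfull {L : Finset α} {ι : α → EuclideanSpace ℝ (Fin 2)}
    (hinj : Set.InjOn ι L) (hcirc : ∀ a ∈ L, ‖ι a‖ = 1) : planarSpan ι L = RLfull L :=
  le_antisymm (Submodule.span_mono fun _ ⟨Γ, k, hΓ, _, hx⟩ => ⟨Γ, k, hΓ, hx⟩)
    (Submodule.span_le.mpr fun _ ⟨_, _, hΓ, hx⟩ => hx ▸ X_mem_planarSpan hinj hcirc hΓ)

lemma lift_graphPolyHom_sgl (Γ : Graph α) :
    AddMonoidAlgebra.lift ℤ _ (Graph α) graphPolyHom (sgl Γ) = graphPoly Γ := by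
  rw [sgl, AddMonoidAlgebra.lift_single, one_smul]
  rfl

lemma relIdeal_le_ker_lift_graphPolyHom :
    relIdeal α ≤ RingHom.ker (AddMonoidAlgebra.lift ℤ _ (Graph α) graphPolyHom) := by
  refine Ideal.span_le.mpr ?_
  rintro x ((⟨Γ, v, hv, rfl⟩ | ⟨Γ, a, b, rfl⟩) | ⟨Γ, a, b, c, d, rfl⟩) <;>
    simp only [SetLike.mem_coe, RingHom.mem_ker, map_add, map_sub, lift_graphPolyHom_sgl]
  · exact Multiset.prod_eq_zero (Multiset.mem_map.mpr ⟨(v, v), hv, by simp [edgePoly]⟩)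
  · simp [graphPoly, edgePoly]
    ring
  · simp [graphPoly, edgePoly]
    ring

def pluckerHom (α : Type) [DecidableEq α] :
    RL α →ₐ[ℤ] MvPolynomial (α × Fin 2) ℤ :=
  Ideal.Quotient.liftₐ (relIdeal α) (AddMonoidAlgebra.lift ℤ _ (Graph α) graphPolyHom)
    fun _ hx => relIdeal_le_ker_lift_graphPolyHom hx

lemma pluckerHom_X (Γ : Graph α) : pluckerHom α (X Γ) = graphPoly Γ :=
  lift_graphPolyHom_sgl Γ

theorem linearIndependent_X_of_planar {L : Finset α} {ι : α → EuclideanSpace ℝ (Fin 2)}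
    (hinj : Set.InjOn ι L) (hcirc : ∀ a ∈ L, ‖ι a‖ = 1) {D : Set (Graph α)}
    (hD : ∀ Γ ∈ D, (∃ k, IsRegOn L Γ k) ∧ IsPlanarOn ι Γ)
    (hDinj : ∀ Γ ∈ D, ∀ Δ ∈ D, undG Γ = undG Δ → Γ = Δ) :
    LinearIndependent ℤ fun Δ : D => X (Δ : Graph α) := by
  have hL (Γ : D) : ∀ e ∈ (Γ : Graph α), e.1 ∈ L ∧ e.2 ∈ L :=
    fun _ he => (hD Γ Γ.2).1.choose_spec.mem_of_mem he
  have hθ (Γ : D) : ∀ e ∈ (Γ : Graph α), (planeArg ∘ ι) e.1 ≠ (planeArg ∘ ι) e.2 :=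
    fun _ he => (hD Γ Γ.2).2.planeArg_ne hinj hcirc (hL Γ) he
  refine LinearIndependent.of_comp (pluckerHom α).toLinearMap ?_
  simp only [Function.comp_def, AlgHom.toLinearMap_apply, pluckerHom_X]
  refine linearIndependent_of_isMinWeightMonomial
    (fun Γ => isMinWeightMonomial_graphPoly (hθ Γ)) fun Γ Δ h => Subtype.ext ?_
  exact hDinj _ Γ.2 _ Δ.2 (undG_eq_of_lowMonomial_eq hinj hcirc (hL Γ) (hL Δ) (hD Γ Γ.2).2
    (hD Δ Δ.2).2 h)

/-- Kempe: fix an embedding `ι` of the finite set `L` into the unit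
circle in the plane.  Then the classes `X_Γ` of planar regular graphs span `R_L` over
`ℤ`, and the only `ℤ`-linear relations among them are the sign relations: two planar
regular graphs with the same underlying undirected graph have equal classes up to
sign, and for any choice, for each undirected planar regular graph, of a directed
representative, the resulting classes are linearly independent, hence form a
`ℤ`-basis of `R_L`. -/
theorem kempe_planar_basis (L : Finset α)
    (ι : α → EuclideanSpace ℝ (Fin 2))
    (hinj : Set.InjOn ι L) (hcirc : ∀ a ∈ L, ‖ι a‖ = 1) :
    (Submodule.span ℤ {x : RL α | ∃ Γ k, IsRegOn L Γ k ∧ IsPlanarOn ι Γ ∧ x = X Γ}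
      = RLfull L) ∧
    (∀ Γ Δ : Graph α, (∃ k, IsRegOn L Γ k) → IsPlanarOn ι Γ → IsPlanarOn ι Δ →
      undG Γ = undG Δ → X Γ = X Δ ∨ X Γ = - X Δ) ∧
    (∀ D : Set (Graph α),
      (∀ Γ ∈ D, (∃ k, IsRegOn L Γ k) ∧ IsPlanarOn ι Γ) →
      (∀ Γ : Graph α, (∃ k, IsRegOn L Γ k) → IsPlanarOn ι Γ →
        ∃! Δ : Graph α, Δ ∈ D ∧ undG Δ = undG Γ) →
      LinearIndependent ℤ fun Δ : D => X (Δ : Graph α)) := by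
  refine ⟨planarSpan_eq_RLfull hinj hcirc, fun Γ Δ _ _ _ h => X_eq_or_eq_neg_of_undG_eq h,
    fun D hD hDunique => linearIndependent_X_of_planar hinj hcirc hD ?_⟩
  intro Γ hΓ Δ hΔ h
  obtain ⟨Θ, -, hΘ⟩ := hDunique Δ (hD Δ hΔ).1 (hD Δ hΔ).2
  exact (hΘ Γ ⟨hΓ, h⟩).trans (hΘ Δ ⟨hΔ, rfl⟩).symm

end HMSV

end
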